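/- arXiv:2304.06113 — 3 statements merged into one kernel-verified Lean document; each statement's English description precedes it below -/
import Mathlib

section
/- For every positive integer n, the Wiener index d(SS_n) of the distributive lattice SS_n of lower sets of the shifted staircase poset S_n = {(i,j) : 1 ≤ i ≤ j ≤ n} satisfies 3 · d(SS_n) = 2n(2n + 1) · C(2n − 1, n), i.e., d(SS_n) = (2n(2n+1)/3) · binomial(2n − 1, n). -/
/-- The Hasse diagram graph of a preorder: vertices are the elements, with an
edge between two elements exactly when one covers the other. -/
def hasseGraph (α : Type*) [Preorder α] : SimpleGraph α where
  Adj a b := a ⋖ b ∨ b ⋖ a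
  symm := ⟨fun _ _ h => h.symm⟩
  loopless := ⟨fun _ h => h.elim (fun h' => h'.lt.ne rfl) (fun h' => h'.lt.ne rfl)⟩

/-- The Wiener index of a poset: the sum over all ordered pairs of elements
of the graph distance in the Hasse diagram graph. -/
noncomputable def wienerIndex (α : Type*) [Preorder α] : ℕ :=
  ∑ᶠ p : α, ∑ᶠ q : α, (hasseGraph α).dist p q
/-- The shifted staircase poset $S_n = \{(i,j) : 1 ≤ i ≤ j ≤ n\}$ with
componentwise order. -/
abbrev Staircase (n : ℕ) : Type := {p : Fin n × Fin n // p.1 ≤ p.2}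

/-!
In the Hasse diagram of the lattice of lower sets of a finite poset, the distance between `A` and
`B` is `#(A ∆ B)`: every edge changes a lower set by one element, and one can walk down from `A`
to `A ∩ B` and then up to `B` one element at a time. Hence the Wiener index is
`∑ x, 2 * #{A | x ∈ A} * #{A | x ∉ A}`.

A lower set `A` of the shifted staircase meets the `m`-th diagonal `{(i, i + m)}` in an initial
segment of length `a m`, and `a m - a (m + 1) ∈ {0, 1}`. Recording the diagonals where `a` drops
is a bijection onto the subsets `S` of `{0, …, n - 1}`, with `a m = #{s ∈ S | m ≤ s}` (shifted
diagrams of strict partitions). So `(i, i + m)` lies in `2 ^ m * ∑_{k > i} C(n - m, k)` lower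
sets.

With `V u = ∑_t (∑_{k > t} C(u, k)) * (∑_{k ≤ t} C(u, k))` the Wiener index becomes
`∑_m 4 ^ m * 2 * V (n - m)`. Pascal's rule gives `V (u + 1) = 4 * V u + C(2u, u)`, hence
`2 * V u = u * C(2u, u)`, and the closed form follows by induction on `n`.
-/

open Finset
open scoped symmDiff

theorem hasseGraph_adj {α : Type*} [Preorder α] {a b : α} :
    (hasseGraph α).Adj a b ↔ a ⋖ b ∨ b ⋖ a :=
  Iff.rfl

namespace LowerSet

variable {α : Type*} [PartialOrder α] {A B : LowerSet α}

theorem covBy_iff_exists_insert :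
    A ⋖ B ↔ ∃ z ∉ A, (B : Set α) = insert z (A : Set α) := by
  constructor
  · intro h
    obtain ⟨z, hzB, hzA⟩ := Set.exists_of_ssubset (coe_ssubset_coe.2 h.lt)
    -- for `w ∈ B \ A`, the cover `A ⋖ B` squeezes `A < A ⊔ Iic w ≤ B` to `A ⊔ Iic w = B`
    have hsup : ∀ w ∈ B, w ∉ A → B ≤ A ⊔ Iic w := fun w hwB hwA =>
      ((h.eq_or_eq le_sup_left (sup_le h.le (Iic_le.2 hwB))).resolve_left fun he =>
        hwA (he ▸ mem_sup_iff.2 (Or.inr (mem_Iic_iff.2 le_rfl)))).ge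
    refine ⟨z, hzA, Set.Subset.antisymm (fun w hwB => ?_) (Set.insert_subset hzB h.le)⟩
    by_cases hwA : w ∈ A
    · exact Or.inr hwA
    · have hz := (mem_sup_iff.1 (hsup w hwB hwA hzB)).resolve_left hzA
      have hw := (mem_sup_iff.1 (hsup z hzB hzA hwB)).resolve_left hwA
      exact Or.inl ((mem_Iic_iff.1 hw).antisymm (mem_Iic_iff.1 hz))
  · rintro ⟨z, hzA, hB⟩
    have hAB : (A : Set α) ⊆ B := hB ▸ Set.subset_insert z _
    refine ⟨coe_ssubset_coe.1 ⟨hAB, fun h => hzA (h (hB ▸ Set.mem_insert z _))⟩,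
      fun C hAC hCB => ?_⟩
    obtain ⟨w, hwC, hwA⟩ := Set.exists_of_ssubset (coe_ssubset_coe.2 hAC)
    have hzC : z ∈ C := by
      have hwB : w ∈ (B : Set α) := hCB.le hwC
      rw [hB] at hwB
      exact (hwB.resolve_right hwA) ▸ hwC
    refine hCB.not_ge fun v hv => ?_
    rw [hB] at hv
    rcases hv with rfl | hv
    · exact hzC
    · exact hAC.le hv

theorem ncard_symmDiff_eq_one_of_covBy (h : A ⋖ B) : ((A : Set α) ∆ B).ncard = 1 := by
  obtain ⟨z, hzA, hB⟩ := covBy_iff_exists_insert.1 h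
  rw [hB, Set.ncard_eq_one]
  refine ⟨z, Set.ext fun w => ?_⟩
  by_cases hw : w = z
  · simp [Set.mem_symmDiff, hw, hzA]
  · simp [Set.mem_symmDiff, hw]

theorem ncard_symmDiff_eq_one_of_adj (h : (hasseGraph (LowerSet α)).Adj A B) :
    ((A : Set α) ∆ B).ncard = 1 := by
  rcases h with h | h
  · exact ncard_symmDiff_eq_one_of_covBy h
  · rw [symmDiff_comm]; exact ncard_symmDiff_eq_one_of_covBy h

variable [Finite α]

theorem ncard_symmDiff_le_length (w : (hasseGraph (LowerSet α)).Walk A B) :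
    ((A : Set α) ∆ B).ncard ≤ w.length := by
  induction w with
  | nil => simp
  | @cons u v w huv p ih =>
    calc ((u : Set α) ∆ w).ncard ≤ ((u : Set α) ∆ v ∪ (v : Set α) ∆ w).ncard :=
          Set.ncard_le_ncard (symmDiff_triangle _ _ _)
      _ ≤ ((u : Set α) ∆ v).ncard + ((v : Set α) ∆ w).ncard := Set.ncard_union_le _ _
      _ ≤ (p.cons huv).length := by
          rw [ncard_symmDiff_eq_one_of_adj huv, SimpleGraph.Walk.length_cons]; omega

theorem exists_walk_length_eq_ncard_diff (hAB : A ≤ B) :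
    ∃ w : (hasseGraph (LowerSet α)).Walk A B, w.length = ((B : Set α) \ A).ncard := by
  induction hk : ((B : Set α) \ A).ncard generalizing A with
  | zero =>
    obtain rfl : A = B := hAB.antisymm (Set.sdiff_eq_empty.1 ((Set.ncard_eq_zero).1 hk))
    exact ⟨.nil, rfl⟩
  | succ k ih =>
    obtain ⟨z, hz⟩ := (Set.toFinite ((B : Set α) \ A)).exists_minimal
      (Set.nonempty_of_ncard_ne_zero (by omega))
    have hC : ((A ⊔ Iic z : LowerSet α) : Set α) = insert z (A : Set α) := by
      ext y
      simp only [coe_sup, coe_Iic, Set.mem_union, Set.mem_Iic]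
      refine ⟨fun hy => hy.elim Or.inr fun hyz => ?_,
        fun hy => hy.elim (fun h => Or.inr h.le) Or.inl⟩
      by_cases hyA : y ∈ A
      · exact Or.inr hyA
      · exact Or.inl (hz.eq_of_le ⟨B.lower hyz hz.1.1, hyA⟩ hyz)
    have hcov : A ⋖ A ⊔ Iic z := covBy_iff_exists_insert.2 ⟨z, hz.1.2, hC⟩
    obtain ⟨w, hw⟩ := ih (sup_le hAB (Iic_le.2 hz.1.1)) (by
      rw [hC, Set.insert_eq, Set.union_comm, ← Set.sdiff_sdiff,
        Set.ncard_sdiff_singleton_of_mem hz.1, hk]; rfl)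
    exact ⟨.cons (hasseGraph_adj.2 (Or.inl hcov)) w, by
      rw [SimpleGraph.Walk.length_cons, hw]⟩

theorem hasseGraph_dist_eq_ncard_symmDiff (A B : LowerSet α) :
    (hasseGraph (LowerSet α)).dist A B = ((A : Set α) ∆ B).ncard := by
  obtain ⟨wA, hwA⟩ := exists_walk_length_eq_ncard_diff (inf_le_left : A ⊓ B ≤ A)
  obtain ⟨wB, hwB⟩ := exists_walk_length_eq_ncard_diff (inf_le_right : A ⊓ B ≤ B)
  have hlen : (wA.reverse.append wB).length = ((A : Set α) ∆ B).ncard := by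
    rw [SimpleGraph.Walk.length_append, SimpleGraph.Walk.length_reverse, hwA, hwB, coe_inf,
      Set.sdiff_self_inter, Set.sdiff_inter_self_eq_sdiff, Set.symmDiff_def,
      Set.ncard_union_eq disjoint_sdiff_sdiff]
  obtain ⟨p, hp⟩ := SimpleGraph.Reachable.exists_walk_length_eq_dist ⟨wA.reverse.append wB⟩
  exact le_antisymm (hlen ▸ SimpleGraph.dist_le _) (hp ▸ ncard_symmDiff_le_length p)

end LowerSet

open scoped Classical in
theorem sum_sum_ncard_symmDiff {ι α : Type*} [Fintype ι] [Fintype α] (s : ι → Set α) :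
    ∑ i, ∑ j, (s i ∆ s j).ncard = ∑ x, 2 * (#{i | x ∈ s i} * #{i | x ∉ s i}) := by
  have hcount : ∀ t : Set α, t.ncard = ∑ x, if x ∈ t then 1 else 0 := fun t => by
    rw [Set.ncard_eq_toFinset_card', ← card_filter]; congr 1; ext; simp
  have hpoint : ∀ x i j, (if x ∈ s i ∆ s j then 1 else 0) =
      (if x ∈ s i then 1 else 0) * (if x ∉ s j then 1 else 0) +
        (if x ∉ s i then 1 else 0) * (if x ∈ s j then 1 else 0) := fun x i j => by
    by_cases hi : x ∈ s i <;> by_cases hj : x ∈ s j <;> simp [Set.mem_symmDiff, hi, hj]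
  simp_rw [hcount, hpoint]
  conv_lhs => enter [2, i]; rw [sum_comm]
  rw [sum_comm]
  refine sum_congr rfl fun x _ => ?_
  simp_rw [sum_add_distrib, ← sum_mul_sum, card_filter]
  ring

open scoped Classical in
theorem wienerIndex_lowerSet (α : Type*) [PartialOrder α] [Fintype α] :
    wienerIndex (LowerSet α)
      = ∑ x : α, 2 * (#{A : LowerSet α | x ∈ A} * #{A : LowerSet α | x ∉ A}) := by
  rw [wienerIndex, finsum_eq_sum_of_fintype]
  simp_rw [finsum_eq_sum_of_fintype, LowerSet.hasseGraph_dist_eq_ncard_symmDiff]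
  exact sum_sum_ncard_symmDiff (fun A : LowerSet α => (A : Set α))

theorem Finset.card_powerset_filter_card {β : Type*} (U : Finset β) (p : ℕ → Prop)
    [DecidablePred p] :
    #{P ∈ U.powerset | p #P} = ∑ k ∈ range (#U + 1) with p k, (#U).choose k := by
  rw [card_eq_sum_card_fiberwise (f := card) (t := {k ∈ range (#U + 1) | p k}) fun P hP => by
    simp only [coe_filter, mem_powerset] at hP
    simpa [Nat.lt_succ_iff] using ⟨card_le_card hP.1, hP.2⟩]
  refine sum_congr rfl fun k hk => ?_
  rw [← card_powersetCard, powersetCard_eq_filter, filter_filter]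
  exact congrArg card
    (filter_congr fun P _ => ⟨And.right, fun h => ⟨h ▸ (mem_filter.1 hk).2, h⟩⟩)

theorem Finset.card_filter_card_inter {β : Type*} [Fintype β] [DecidableEq β] (U : Finset β)
    (p : ℕ → Prop) [DecidablePred p] :
    #{S : Finset β | p #(S ∩ U)} = 2 ^ #Uᶜ * #{P ∈ U.powerset | p #P} := by
  rw [mul_comm, ← card_powerset Uᶜ, ← card_product]
  refine card_nbij' (fun S => (S ∩ U, S ∩ Uᶜ)) (fun PR => PR.1 ∪ PR.2) ?_ ?_ ?_ ?_
  · intro S hS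
    simp only [coe_filter, mem_univ, true_and, Set.mem_ofPred_eq] at hS
    simp [hS, inter_subset_right]
  · rintro ⟨P, R⟩ hPR
    simp only [coe_product, coe_filter, mem_powerset, Set.mem_prod, Set.mem_ofPred_eq,
      mem_coe] at hPR
    simp only [coe_filter, mem_univ, true_and, Set.mem_ofPred_eq]
    rw [union_inter_distrib_right, inter_eq_left.2 hPR.1.1,
      disjoint_iff_inter_eq_empty.1 (disjoint_compl_left.mono_left hPR.2), union_empty]
    exact hPR.1.2
  · intro S _
    simp [← inter_union_distrib_left]
  · rintro ⟨P, R⟩ hPR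
    simp only [coe_product, coe_filter, mem_powerset, Set.mem_prod, Set.mem_ofPred_eq,
      mem_coe] at hPR
    ext x <;> have := @hPR.1.1 x <;> have := @hPR.2 x <;> simp at * <;> tauto

theorem Finset.mem_iff_lt_card_of_isLowerSet {D : Finset ℕ} (hD : IsLowerSet (D : Set ℕ))
    {a : ℕ} : a ∈ D ↔ a < #D := by
  constructor
  · intro ha
    simpa using card_le_card fun b hb => hD (Nat.lt_succ_iff.1 (mem_range.1 hb)) ha
  · intro ha
    by_contra haD
    refine (card_le_card fun b hb => mem_range.2 ?_).not_gt (by simpa using ha)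
    by_contra hab
    exact haD (hD (not_lt.1 hab) hb)

theorem Fin.card_filter_le_val {n : ℕ} (m : ℕ) : #{s : Fin n | m ≤ (s : ℕ)} = n - m := by
  have := card_filter_add_card_filter_not (s := univ) (fun s : Fin n => m ≤ (s : ℕ))
  simp only [not_le, Fin.card_filter_val_lt, card_univ, Fintype.card_fin] at this
  omega

namespace Nat

def upperChooseSum (u t : ℕ) : ℕ := ∑ k ∈ range (u + 1) with t < k, u.choose k

def lowerChooseSum (u t : ℕ) : ℕ := ∑ k ∈ range (u + 1) with k ≤ t, u.choose k

theorem upperChooseSum_add_lowerChooseSum (u t : ℕ) :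
    upperChooseSum u t + lowerChooseSum u t = 2 ^ u := by
  simp_rw [upperChooseSum, lowerChooseSum, ← not_lt, sum_filter_add_sum_filter_not,
    sum_range_choose]

theorem upperChooseSum_self (u : ℕ) : upperChooseSum u u = 0 :=
  sum_eq_zero fun k hk => by
    simp only [mem_filter, mem_range] at hk; omega

theorem upperChooseSum_succ (u t : ℕ) :
    upperChooseSum (u + 1) t = 2 * upperChooseSum u t + u.choose t := by
  let f (v k : ℕ) : ℕ := if t < k then v.choose k else 0
  have hf : ∀ v, upperChooseSum v t = ∑ k ∈ range (v + 1), f v k := fun v => sum_filter _ _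
  -- Pascal's rule, split according to whether `k + 1` or `k` lies above `t`
  have hpascal :
      ∀ k, f (u + 1) (k + 1) = f u (k + 1) + f u k + if k = t then u.choose k else 0 := by
    intro k
    rcases lt_trichotomy t k with h | rfl | h
    · simp [f, h, h.trans (lt_succ_self k), h.ne', choose_succ_succ', add_comm]
    · simp [f, choose_succ_succ', add_comm]
    · simp [f, h.not_gt, h.ne, show ¬ t < k + 1 by omega]
  have hshift : ∑ k ∈ range (u + 1), f u (k + 1) = upperChooseSum u t := by
    have := sum_range_succ' (f u) (u + 1)
    rw [sum_range_succ] at this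
    simp only [f, choose_succ_self, not_lt_zero, if_false, ite_self, add_zero] at this
    rw [hf, ← this]
  have hdiag : ∑ k ∈ range (u + 1), (if k = t then u.choose k else 0) = u.choose t := by
    rw [sum_ite_eq']
    split_ifs with h
    · rfl
    · exact (choose_eq_zero_of_lt (by simpa using h)).symm
  rw [hf, sum_range_succ', sum_congr rfl fun k _ => hpascal k, sum_add_distrib, sum_add_distrib,
    hshift, hdiag, ← hf]
  simp [f]; ring

theorem lowerChooseSum_succ_add (u t : ℕ) :
    lowerChooseSum (u + 1) t + u.choose t = 2 * lowerChooseSum u t := by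
  have h₁ := upperChooseSum_add_lowerChooseSum (u + 1) t
  have h₂ := upperChooseSum_add_lowerChooseSum u t
  rw [upperChooseSum_succ, pow_succ] at h₁
  omega

theorem sum_choose_mul_lowerChooseSum (u : ℕ) :
    ∑ t ∈ range (u + 1), u.choose t * lowerChooseSum u t
      = ∑ t ∈ range (u + 1), u.choose t * upperChooseSum u t + centralBinom u := by
  simp_rw [lowerChooseSum, upperChooseSum, sum_filter, mul_sum]
  rw [sum_comm (f := fun t k => u.choose t * if t < k then u.choose k else 0),
    centralBinom_eq_two_mul_choose, ← sum_range_choose_sq, ← sum_add_distrib]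
  refine sum_congr rfl fun t ht => ?_
  have hdiag :
      u.choose t ^ 2 = ∑ k ∈ range (u + 1), if k = t then u.choose t * u.choose k else 0 := by
    simp [sq, ht]
  rw [hdiag, ← sum_add_distrib]
  refine sum_congr rfl fun k _ => ?_
  rcases lt_trichotomy k t with h | rfl | h
  · simp [h, h.le, h.ne, mul_comm]
  · simp
  · simp [h.not_ge, h.not_gt, h.ne']

def chooseProdSum (u : ℕ) : ℕ := ∑ t ∈ range u, upperChooseSum u t * lowerChooseSum u t

theorem chooseProdSum_succ (u : ℕ) :
    chooseProdSum (u + 1) = 4 * chooseProdSum u + centralBinom u := by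
  have hterm : ∀ t, upperChooseSum (u + 1) t * lowerChooseSum (u + 1) t
      + (2 * (u.choose t * upperChooseSum u t) + u.choose t ^ 2)
      = 4 * (upperChooseSum u t * lowerChooseSum u t) + 2 * (u.choose t * lowerChooseSum u t) := by
    intro t
    rw [upperChooseSum_succ]
    linear_combination (2 * upperChooseSum u t + u.choose t) * lowerChooseSum_succ_add u t
  have hsum := sum_congr rfl fun t (_ : t ∈ range (u + 1)) => hterm t
  simp only [sum_add_distrib, ← mul_sum, sum_range_choose_sq] at hsum
  rw [sum_choose_mul_lowerChooseSum,
    sum_range_succ (fun t => upperChooseSum u t * lowerChooseSum u t), upperChooseSum_self,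
    zero_mul, add_zero, ← centralBinom_eq_two_mul_choose] at hsum
  rw [chooseProdSum, chooseProdSum]
  omega

theorem two_mul_chooseProdSum (u : ℕ) : 2 * chooseProdSum u = u * centralBinom u := by
  induction u with
  | zero => simp [chooseProdSum]
  | succ u ih =>
    rw [chooseProdSum_succ, succ_mul_centralBinom_succ]
    linear_combination 4 * ih

theorem three_mul_sum_four_pow_mul_centralBinom (n : ℕ) :
    3 * ∑ m ∈ range n, 4 ^ m * ((n - m) * centralBinom (n - m))
      = n * (2 * n + 1) * centralBinom n := by
  induction n with
  | zero => simp
  | succ n ih =>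
    rw [sum_range_succ']
    simp only [Nat.add_sub_add_right, pow_succ, Nat.sub_zero, pow_zero, one_mul]
    have h := succ_mul_centralBinom_succ n
    rw [mul_add, show ∑ m ∈ range n, 4 ^ m * 4 * ((n - m) * centralBinom (n - m)) =
      4 * ∑ m ∈ range n, 4 ^ m * ((n - m) * centralBinom (n - m)) by
        rw [mul_sum]; exact sum_congr rfl fun _ _ => by ring]
    linear_combination 4 * ih - 2 * n * h

theorem two_mul_mul_choose_two_mul_sub_one (n : ℕ) :
    2 * n * (2 * n - 1).choose n = n * centralBinom n := by
  rcases n with _ | n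
  · simp
  · have h : centralBinom (n + 1) = 2 * (2 * n + 1).choose (n + 1) := by
      rw [centralBinom_eq_two_mul_choose, show 2 * (n + 1) = 2 * n + 1 + 1 by ring,
        choose_succ_succ', choose_symm_half]
      ring
    rw [h, show 2 * (n + 1) - 1 = 2 * n + 1 by omega]
    ring

end Nat

namespace Staircase

variable {n : ℕ}

/-- The element `(i, i + m)`, on the `m`-th diagonal. -/
def cell (i m : ℕ) (h : i + m < n) : Staircase n :=
  ⟨(⟨i, by omega⟩, ⟨i + m, h⟩), Fin.le_def.2 (Nat.le_add_right i m)⟩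

theorem cell_le_cell {i m i' m' : ℕ} {h : i + m < n} {h' : i' + m' < n} :
    cell i m h ≤ cell i' m' h' ↔ i ≤ i' ∧ i + m ≤ i' + m' :=
  Iff.rfl

theorem exists_eq_cell (x : Staircase n) : ∃ i m h, x = cell i m h :=
  ⟨x.1.1, x.1.2 - x.1.1, by have := Fin.le_def.1 x.2; omega,
    Subtype.ext (Prod.ext rfl (Fin.ext (by have := Fin.le_def.1 x.2; simp [cell]; omega)))⟩

def countGe (S : Finset (Fin n)) (m : ℕ) : ℕ :=
  #(S ∩ ({s | m ≤ (s : ℕ)} : Finset (Fin n)))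

theorem countGe_le (S : Finset (Fin n)) (m : ℕ) : countGe S m ≤ n - m :=
  (card_le_card inter_subset_right).trans (Fin.card_filter_le_val m).le

theorem countGe_anti (S : Finset (Fin n)) {a b : ℕ} (hab : a ≤ b) :
    countGe S b ≤ countGe S a :=
  card_le_card (inter_subset_inter_left fun s hs => by simp at hs ⊢; omega)

theorem countGe_eq_succ_add {m : ℕ} (S : Finset (Fin n)) (hm : m < n) :
    countGe S m = countGe S (m + 1) + if (⟨m, hm⟩ : Fin n) ∈ S then 1 else 0 := by
  simp only [countGe, inter_filter, inter_univ, card_filter]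
  rw [← sum_ite_eq' S (⟨m, hm⟩ : Fin n) fun _ => 1, ← sum_add_distrib]
  refine sum_congr rfl fun s _ => ?_
  by_cases hs : (s : ℕ) = m
  · obtain rfl : s = ⟨m, hm⟩ := Fin.ext hs
    rw [if_pos le_rfl, if_neg (by simp), if_pos rfl]
  · have : s ≠ ⟨m, hm⟩ := fun h => hs (by simp [h])
    simp only [this, if_false, add_zero]
    split_ifs <;> omega

theorem countGe_le_add (S : Finset (Fin n)) (m d : ℕ) :
    countGe S m ≤ countGe S (m + d) + d := by
  induction d with
  | zero => simp
  | succ d ih =>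
    rw [show m + (d + 1) = m + d + 1 by ring]
    by_cases hmd : m + d < n
    · have := countGe_eq_succ_add S hmd
      split_ifs at this <;> omega
    · have := countGe_le S (m + d)
      omega

def lowerSetOfFinset (S : Finset (Fin n)) : LowerSet (Staircase n) where
  carrier := {x | (x.1.1 : ℕ) < countGe S (x.1.2 - x.1.1)}
  lower' := by
    intro x y hyx hx
    obtain ⟨i, m, hx', rfl⟩ := exists_eq_cell x
    obtain ⟨i', m', hy', rfl⟩ := exists_eq_cell y
    obtain ⟨hi, hj⟩ := cell_le_cell.1 hyx
    simp only [cell, Set.mem_ofPred_eq, Nat.add_sub_cancel_left] at hx ⊢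
    rcases le_total m' m with h | h
    · exact (hi.trans_lt hx).trans_le (countGe_anti S h)
    · have := countGe_le_add S m (m' - m)
      rw [Nat.add_sub_cancel' h] at this
      omega

theorem cell_mem_lowerSetOfFinset {S : Finset (Fin n)} {i m : ℕ} {h : i + m < n} :
    cell i m h ∈ lowerSetOfFinset S ↔ i < countGe S m := by
  show i < countGe S (i + m - i) ↔ _
  rw [Nat.add_sub_cancel_left]

open scoped Classical in
noncomputable def diagCount (A : LowerSet (Staircase n)) (m : ℕ) : ℕ :=
  #{i ∈ range n | ∃ h : i + m < n, cell i m h ∈ A}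

theorem diagCount_le (A : LowerSet (Staircase n)) (m : ℕ) : diagCount A m ≤ n - m := by
  classical
  refine (card_le_card fun i hi => ?_).trans (card_range _).le
  obtain ⟨h, -⟩ := (mem_filter.1 hi).2
  exact mem_range.2 (by omega)

theorem cell_mem_iff_lt_diagCount {A : LowerSet (Staircase n)} {i m : ℕ} (h : i + m < n) :
    cell i m h ∈ A ↔ i < diagCount A m := by
  rw [diagCount, ← mem_iff_lt_card_of_isLowerSet]
  · simp [h, show i < n by omega]
  · intro a b hba hb
    simp only [coe_filter, mem_range, Set.mem_ofPred_eq] at hb ⊢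
    obtain ⟨-, ha, haA⟩ := hb
    exact ⟨by omega, by omega, A.lower (cell_le_cell.2 ⟨hba, by omega⟩) haA⟩

theorem diagCount_succ_le (A : LowerSet (Staircase n)) (m : ℕ) :
    diagCount A (m + 1) ≤ diagCount A m := by
  by_contra! hlt
  have hkn := diagCount_le A (m + 1)
  have hmem : cell (diagCount A m) (m + 1) (by omega) ∈ A := (cell_mem_iff_lt_diagCount _).2 hlt
  have hmem' : cell (diagCount A m) m (by omega) ∈ A :=
    A.lower (cell_le_cell.2 ⟨le_rfl, by omega⟩) hmem
  exact lt_irrefl _ ((cell_mem_iff_lt_diagCount _).1 hmem')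

theorem diagCount_le_succ_add_one (A : LowerSet (Staircase n)) (m : ℕ) :
    diagCount A m ≤ diagCount A (m + 1) + 1 := by
  by_contra! hlt
  have hkn := diagCount_le A m
  have hmem : cell (diagCount A (m + 1) + 1) m (by omega) ∈ A :=
    (cell_mem_iff_lt_diagCount _).2 hlt
  have hmem' : cell (diagCount A (m + 1)) (m + 1) (by omega) ∈ A :=
    A.lower (cell_le_cell.2 ⟨Nat.le_succ _, by omega⟩) hmem
  exact lt_irrefl _ ((cell_mem_iff_lt_diagCount _).1 hmem')

theorem diagCount_eq_zero (A : LowerSet (Staircase n)) {m : ℕ} (hm : n ≤ m) :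
    diagCount A m = 0 :=
  Nat.eq_zero_of_le_zero ((diagCount_le A m).trans (by omega))

theorem diagCount_lowerSetOfFinset (S : Finset (Fin n)) (m : ℕ) :
    diagCount (lowerSetOfFinset S) m = countGe S m := by
  have hle := countGe_le S m
  rw [diagCount, ← card_range (countGe S m)]
  congr 1
  ext i
  simp only [mem_filter, mem_range, cell_mem_lowerSetOfFinset]
  exact ⟨fun ⟨_, _, h⟩ => h, fun h => ⟨by omega, by omega, h⟩⟩

open scoped Classical in
noncomputable def finsetOfLowerSet (A : LowerSet (Staircase n)) : Finset (Fin n) :=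
  {s | diagCount A (s + 1) < diagCount A s}

theorem countGe_finsetOfLowerSet (A : LowerSet (Staircase n)) (m : ℕ) :
    countGe (finsetOfLowerSet A) m = diagCount A m := by
  induction hk : n - m generalizing m with
  | zero =>
    have := countGe_le (finsetOfLowerSet A) m
    rw [diagCount_eq_zero A (by omega)]
    omega
  | succ k ih =>
    have hm : m < n := by omega
    have h₁ := diagCount_succ_le A m
    have h₂ := diagCount_le_succ_add_one A m
    rw [countGe_eq_succ_add _ hm, ih (m + 1) (by omega)]
    simp only [finsetOfLowerSet, mem_filter, mem_univ, true_and]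
    split_ifs <;> omega

noncomputable def finsetEquivLowerSet : Finset (Fin n) ≃ LowerSet (Staircase n) where
  toFun := lowerSetOfFinset
  invFun := finsetOfLowerSet
  left_inv S := by
    ext s
    simp only [finsetOfLowerSet, mem_filter, mem_univ, true_and,
      diagCount_lowerSetOfFinset, countGe_eq_succ_add S s.isLt]
    by_cases hs : s ∈ S <;> simp [hs]
  right_inv A := by
    refine SetLike.ext fun x => ?_
    obtain ⟨i, m, h, rfl⟩ := exists_eq_cell x
    rw [cell_mem_lowerSetOfFinset, countGe_finsetOfLowerSet, cell_mem_iff_lt_diagCount]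

theorem card_filter_countGe {m : ℕ} (hm : m ≤ n) (p : ℕ → Prop) [DecidablePred p] :
    #{S : Finset (Fin n) | p (countGe S m)}
      = 2 ^ m * ∑ k ∈ range (n - m + 1) with p k, (n - m).choose k := by
  have hU := Fin.card_filter_le_val (n := n) m
  trans #{S : Finset (Fin n) | p #(S ∩ ({s | m ≤ (s : ℕ)} : Finset (Fin n)))}
  · rfl
  rw [card_filter_card_inter, card_powerset_filter_card, card_compl, hU, Fintype.card_fin,
    Nat.sub_sub_self hm]

open scoped Classical in
theorem card_cell_mem {i m : ℕ} (h : i + m < n) :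
    #{A : LowerSet (Staircase n) | cell i m h ∈ A} = 2 ^ m * Nat.upperChooseSum (n - m) i := by
  rw [← card_equiv finsetEquivLowerSet (s := ({S | i < countGe S m} : Finset (Finset (Fin n))))
    fun S => by simp [finsetEquivLowerSet, cell_mem_lowerSetOfFinset]]
  exact card_filter_countGe (by omega) (i < ·)

open scoped Classical in
theorem card_cell_notMem {i m : ℕ} (h : i + m < n) :
    #{A : LowerSet (Staircase n) | cell i m h ∉ A} = 2 ^ m * Nat.lowerChooseSum (n - m) i := by
  rw [← card_equiv finsetEquivLowerSet (s := ({S | countGe S m ≤ i} : Finset (Finset (Fin n))))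
    fun S => by simp [finsetEquivLowerSet, cell_mem_lowerSetOfFinset]]
  exact card_filter_countGe (by omega) (· ≤ i)

theorem sum_eq_sum_range_of_cell {M : Type*} [AddCommMonoid M] {f : Staircase n → M}
    {g : ℕ → ℕ → M} (hfg : ∀ i m h, f (cell i m h) = g m i) :
    ∑ x, f x = ∑ m ∈ range n, ∑ i ∈ range (n - m), g m i := by
  have hcoord : ∀ i m (h : i + m < n),
      (⟨((cell i m h).1.2 : ℕ) - (cell i m h).1.1, (cell i m h).1.1⟩ : Σ _ : ℕ, ℕ)
        = ⟨m, i⟩ :=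
    fun i m h => by simp [cell]
  rw [sum_sigma' (range n) (fun m => range (n - m))]
  refine sum_nbij (fun x => ⟨(x.1.2 : ℕ) - x.1.1, x.1.1⟩) ?_ ?_ ?_ ?_
  · intro x _
    obtain ⟨i, m, h, rfl⟩ := exists_eq_cell x
    rw [hcoord]
    simp only [mem_sigma, mem_range]
    omega
  · intro x _ y _ hxy
    obtain ⟨i, m, h, rfl⟩ := exists_eq_cell x
    obtain ⟨i', m', h', rfl⟩ := exists_eq_cell y
    simp only [hcoord, Sigma.mk.injEq, heq_eq_eq] at hxy
    obtain ⟨rfl, rfl⟩ := hxy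
    rfl
  · rintro ⟨m, i⟩ hmi
    simp only [coe_sigma, Set.mem_sigma_iff, coe_range, Set.mem_Iio] at hmi
    exact ⟨cell i m (by omega), mem_coe.2 (mem_univ _), hcoord _ _ _⟩
  · intro x _
    obtain ⟨i, m, h, rfl⟩ := exists_eq_cell x
    rw [hfg, hcoord]

end Staircase

theorem wienerIndex_lowerSet_staircase (n : ℕ) :
    wienerIndex (LowerSet (Staircase n))
      = ∑ m ∈ range n, 4 ^ m * ((n - m) * Nat.centralBinom (n - m)) := by
  classical
  rw [wienerIndex_lowerSet, Staircase.sum_eq_sum_range_of_cell (g := fun m i =>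
      2 * (2 ^ m * Nat.upperChooseSum (n - m) i * (2 ^ m * Nat.lowerChooseSum (n - m) i)))
    fun i m h => by rw [Staircase.card_cell_mem h, Staircase.card_cell_notMem h]]
  refine sum_congr rfl fun m _ => ?_
  rw [← Nat.two_mul_chooseProdSum, Nat.chooseProdSum, mul_sum, mul_sum]
  exact sum_congr rfl fun i _ => by rw [show (4 : ℕ) = 2 * 2 from rfl, mul_pow]; ring

theorem wiener_staircase_general (n : ℕ) :
    3 * wienerIndex (LowerSet (Staircase n))
      = 2 * n * (2 * n + 1) * Nat.choose (2 * n - 1) n := by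
  rw [wienerIndex_lowerSet_staircase, Nat.three_mul_sum_four_pow_mul_centralBinom]
  linear_combination (2 * n + 1) * (Nat.two_mul_mul_choose_two_mul_sub_one n).symm

/-- Wiener index of the lattice of lower sets of the shifted staircase. -/
theorem wiener_staircase (n : ℕ) (hn : 0 < n) :
    3 * wienerIndex (LowerSet (Staircase n))
      = 2 * n * (2 * n + 1) * Nat.choose (2 * n - 1) n :=
  wiener_staircase_general n
end

section
/- For every natural number n, the number of lower sets (order ideals) of the shifted staircase poset S_n = {(i,j) : 1 ≤ i ≤ j ≤ n} with componentwise order equals 2^n. -/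
namespace StaircaseAux

variable {m n : ℕ}

/-- Build a staircase element from natural number coordinates. -/
def mk (i j : ℕ) (hij : i ≤ j) (hj : j < m) : Staircase m :=
  ⟨(⟨i, lt_of_le_of_lt hij hj⟩, ⟨j, hj⟩), Fin.mk_le_mk.mpr hij⟩

lemma le_def (q r : Staircase m) :
    q ≤ r ↔ (q.1.1 : ℕ) ≤ r.1.1 ∧ (q.1.2 : ℕ) ≤ r.1.2 := by
  rw [← Subtype.coe_le_coe, Prod.le_def, Fin.le_def, Fin.le_def]

@[simp] lemma mk_fst (i j : ℕ) (hij : i ≤ j) (hj : j < m) :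
    ((mk i j hij hj).1.1 : ℕ) = i := rfl

@[simp] lemma mk_snd (i j : ℕ) (hij : i ≤ j) (hj : j < m) :
    ((mk i j hij hj).1.2 : ℕ) = j := rfl

lemma self_le (q : Staircase m) : (q.1.1 : ℕ) ≤ (q.1.2 : ℕ) := Fin.le_def.mp q.2

lemma eq_mk (q : Staircase m) (i j : ℕ) (hij : i ≤ j) (hj : j < m)
    (h1 : (q.1.1 : ℕ) = i) (h2 : (q.1.2 : ℕ) = j) : q = mk i j hij hj := by
  apply Subtype.ext
  apply Prod.ext <;> apply Fin.ext <;> simpa [mk]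

/-- restriction to the first `n` columns -/
def restrict (I : LowerSet (Staircase (n+1))) : LowerSet (Staircase n) where
  carrier := {p | mk (p.1.1 : ℕ) (p.1.2 : ℕ) (self_le p) (by omega) ∈ I}
  lower' := by
    intro a b hba ha
    refine I.lower ?_ ha
    rw [le_def] at hba ⊢
    simpa using hba

/-- shift rows/columns down by one -/
def shiftDown (I : LowerSet (Staircase (n+1))) : LowerSet (Staircase n) where
  carrier := {p | mk ((p.1.1 : ℕ)+1) ((p.1.2 : ℕ)+1)
      (by have := self_le p; omega) (by omega) ∈ I}
  lower' := by
    intro a b hba ha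
    refine I.lower ?_ ha
    rw [le_def] at hba ⊢
    simp only [mk_fst, mk_snd]
    omega

lemma mem_restrict (I : LowerSet (Staircase (n+1))) (p : Staircase n) :
    p ∈ restrict I ↔ mk (p.1.1 : ℕ) (p.1.2 : ℕ) (self_le p) (by omega) ∈ I :=
  Iff.rfl

lemma mem_shiftDown (I : LowerSet (Staircase (n+1))) (p : Staircase n) :
    p ∈ shiftDown I ↔ mk ((p.1.1 : ℕ)+1) ((p.1.2 : ℕ)+1)
      (by have := self_le p; omega) (by omega) ∈ I :=
  Iff.rfl

/-- embed a lower set of `Staircase n` into `Staircase (n+1)` (avoiding last column) -/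
def castUp (J : LowerSet (Staircase n)) : LowerSet (Staircase (n+1)) where
  carrier := {q | ∃ (i j : ℕ) (hij : i ≤ j) (hj : j < n),
      (q.1.1 : ℕ) = i ∧ (q.1.2 : ℕ) = j ∧ mk i j hij hj ∈ J}
  lower' := by
    rintro a b hba ⟨i, j, hij, hj, h1, h2, hm⟩
    rw [le_def] at hba
    have hbb := self_le b
    refine ⟨(b.1.1 : ℕ), (b.1.2 : ℕ), hbb, by omega, rfl, rfl, J.lower ?_ hm⟩
    rw [le_def]
    simp only [mk_fst, mk_snd]
    omega

lemma mem_castUp (J : LowerSet (Staircase n)) (q : Staircase (n+1)) :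
    q ∈ castUp J ↔ ∃ (i j : ℕ) (hij : i ≤ j) (hj : j < n),
      (q.1.1 : ℕ) = i ∧ (q.1.2 : ℕ) = j ∧ mk i j hij hj ∈ J := Iff.rfl

/-- the full first row together with the shift-up of `J` -/
def shiftUpRow (J : LowerSet (Staircase n)) : LowerSet (Staircase (n+1)) where
  carrier := {q | (q.1.1 : ℕ) = 0 ∨ ∃ (i j : ℕ) (hij : i ≤ j) (hj : j < n),
      (q.1.1 : ℕ) = i + 1 ∧ (q.1.2 : ℕ) = j + 1 ∧ mk i j hij hj ∈ J}
  lower' := by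
    rintro a b hba (h0 | ⟨i, j, hij, hj, h1, h2, hm⟩)
    · rw [le_def] at hba
      left; omega
    rw [le_def] at hba
    rcases Nat.eq_zero_or_pos (b.1.1 : ℕ) with hb0 | hb0
    · exact Or.inl hb0
    have hbb := self_le b
    refine Or.inr ⟨(b.1.1 : ℕ) - 1, (b.1.2 : ℕ) - 1, by omega, by omega,
      by omega, by omega, J.lower ?_ hm⟩
    rw [le_def]
    simp only [mk_fst, mk_snd]
    omega

lemma mem_shiftUpRow (J : LowerSet (Staircase n)) (q : Staircase (n+1)) :
    q ∈ shiftUpRow J ↔ (q.1.1 : ℕ) = 0 ∨ ∃ (i j : ℕ) (hij : i ≤ j) (hj : j < n),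
      (q.1.1 : ℕ) = i + 1 ∧ (q.1.2 : ℕ) = j + 1 ∧ mk i j hij hj ∈ J := Iff.rfl

/-- the top-right cell -/
def topCell (n : ℕ) : Staircase (n+1) := mk 0 n (Nat.zero_le n) (Nat.lt_succ_self n)

open Classical in
noncomputable def splitEquiv (n : ℕ) :
    LowerSet (Staircase (n+1)) ≃ Bool × LowerSet (Staircase n) where
  toFun I := if topCell n ∈ I then (true, shiftDown I) else (false, restrict I)
  invFun p := if p.1 then shiftUpRow p.2 else castUp p.2
  left_inv I := by
    by_cases ht : topCell n ∈ I
    · simp only [ht, if_pos, if_true]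
      apply SetLike.ext
      intro q
      rw [mem_shiftUpRow]
      constructor
      · rintro (h0 | ⟨i, j, hij, hj, h1, h2, hm⟩)
        · refine I.lower ?_ ht
          rw [le_def]
          simp only [topCell, mk_fst, mk_snd]
          omega
        · rw [mem_shiftDown] at hm
          rwa [eq_mk q (i+1) (j+1) (by omega) (by omega) h1 h2]
      · intro hq
        rcases Nat.eq_zero_or_pos (q.1.1 : ℕ) with h0 | h0
        · exact Or.inl h0
        have hqq := self_le q
        have hq1 : (q.1.1 : ℕ) < n + 1 := q.1.1.isLt
        have hq2 : (q.1.2 : ℕ) < n + 1 := q.1.2.isLt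
        refine Or.inr ⟨(q.1.1:ℕ)-1, (q.1.2:ℕ)-1, by omega, by omega, by omega, by omega, ?_⟩
        rw [mem_shiftDown]
        simp only [mk_fst, mk_snd]
        rwa [← eq_mk q _ _ _ _ (by omega) (by omega)]
    · simp only [ht, if_neg, if_false, not_false_iff, Bool.false_eq_true]
      apply SetLike.ext
      intro q
      rw [mem_castUp]
      constructor
      · rintro ⟨i, j, hij, hj, h1, h2, hm⟩
        rw [mem_restrict] at hm
        simp only [mk_fst, mk_snd] at hm
        rwa [eq_mk q i j hij (by omega) h1 h2]
      · intro hq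
        have hj : (q.1.2 : ℕ) < n := by
          rcases Nat.lt_or_ge (q.1.2 : ℕ) n with h | h
          · exact h
          exfalso
          apply ht
          refine I.lower ?_ hq
          rw [le_def]
          have := q.1.2.isLt
          simp only [topCell, mk_fst, mk_snd]
          omega
        refine ⟨(q.1.1:ℕ), (q.1.2:ℕ), self_le q, hj, rfl, rfl, ?_⟩
        rw [mem_restrict]
        simp only [mk_fst, mk_snd]
        rwa [← eq_mk q _ _ _ _ rfl rfl]
  right_inv := by
    rintro ⟨b, J⟩
    cases b
    · simp only [if_false, Bool.false_eq_true]
      have ht : topCell n ∉ castUp J := by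
        rw [mem_castUp]
        rintro ⟨i, j, hij, hj, h1, h2, -⟩
        simp only [topCell, mk_fst, mk_snd] at h1 h2
        omega
      simp only [ht, if_neg, not_false_iff]
      refine Prod.ext rfl ?_
      apply SetLike.ext
      intro p
      rw [mem_restrict, mem_castUp]
      constructor
      · rintro ⟨i, j, hij, hj, h1, h2, hm⟩
        simp only [mk_fst, mk_snd] at h1 h2
        rwa [eq_mk p i j hij hj h1 h2]
      · intro hp
        exact ⟨(p.1.1:ℕ), (p.1.2:ℕ), self_le p, by omega, by simp, by simp,
          by rwa [← eq_mk p _ _ _ _ rfl rfl]⟩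
    · simp only [if_true]
      have ht : topCell n ∈ shiftUpRow J := Or.inl rfl
      simp only [ht, if_pos]
      refine Prod.ext rfl ?_
      apply SetLike.ext
      intro p
      rw [mem_shiftDown, mem_shiftUpRow]
      simp only [mk_fst, mk_snd]
      constructor
      · rintro (h0 | ⟨i, j, hij, hj, h1, h2, hm⟩)
        · omega
        have hi : i = (p.1.1 : ℕ) := by omega
        have hjj : j = (p.1.2 : ℕ) := by omega
        subst hi hjj
        rwa [← eq_mk p _ _ _ _ rfl rfl] at hm
      · intro hp
        refine Or.inr ⟨(p.1.1:ℕ), (p.1.2:ℕ), self_le p, by omega, rfl, rfl, ?_⟩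
        rwa [← eq_mk p _ _ _ _ rfl rfl]

instance : IsEmpty (Staircase 0) := ⟨fun p => p.1.1.elim0⟩

theorem card_zero : Nat.card (LowerSet (Staircase 0)) = 1 := by
  have : Subsingleton (LowerSet (Staircase 0)) :=
    ⟨fun I J => SetLike.ext fun x => x.1.1.elim0⟩
  have : Nonempty (LowerSet (Staircase 0)) := ⟨⊥⟩
  exact Nat.card_eq_one_iff_unique.mpr ⟨‹_›, ‹_›⟩

theorem card_succ (n : ℕ) :
    Nat.card (LowerSet (Staircase (n+1))) = 2 * Nat.card (LowerSet (Staircase n)) := by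
  rw [Nat.card_congr (splitEquiv n), Nat.card_prod]
  simp [Nat.card_eq_fintype_card]

end StaircaseAux

/-- The shifted staircase poset has exactly $2^n$ lower sets. -/
theorem card_lowerSet_staircase (n : ℕ) :
    Nat.card (LowerSet (Staircase n)) = 2 ^ n := by
  induction n with
  | zero => simpa using StaircaseAux.card_zero
  | succ k ih => rw [StaircaseAux.card_succ, ih, pow_succ]; ring
end

section
/- For every natural number n ≥ 0, let R_n be the double-tailed diamond poset on the set {0, 1, ..., 2n+3} in which i ≤ j exactly when i ≤ j as integers and {i, j} ≠ {n+1, n+2}; that is, R_n consists of a chain 0 < 1 < ... < n, two incomparable elements n+1 and n+2 both above n and both below n+3, and a chain n+3 < ... < 2n+3. Then the Wiener index of R_n satisfies 3 · d(R_n) = 2 (n + 3)(4n² + 9n + 8), i.e., d(R_n) = (2/3)(n+3)(4n² + 9n + 8). -/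
open Finset

namespace SimpleGraph

variable {V : Type*} {G : SimpleGraph V} {f : V → ℕ}

theorem Walk.natDist_le_length (hf : ∀ u v, G.Adj u v → Nat.dist (f u) (f v) ≤ 1) {u v : V}
    (w : G.Walk u v) : Nat.dist (f u) (f v) ≤ w.length := by
  induction w with
  | nil => simp
  | @cons u v x hadj w ih =>
    calc Nat.dist (f u) (f x) ≤ Nat.dist (f u) (f v) + Nat.dist (f v) (f x) :=
          Nat.dist.triangle_inequality _ _ _
      _ ≤ _ := by rw [Walk.length_cons]; linarith [hf u v hadj]

theorem Reachable.natDist_le_dist (hf : ∀ u v, G.Adj u v → Nat.dist (f u) (f v) ≤ 1) {u v : V}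
    (h : G.Reachable u v) : Nat.dist (f u) (f v) ≤ G.dist u v := by
  obtain ⟨w, hw⟩ := h.exists_walk_length_eq_dist
  exact hw ▸ w.natDist_le_length hf

end SimpleGraph

section RankedWeakOrder

variable {α : Type*} [Preorder α] {f : α → ℕ} {a b : α}

theorem covBy_of_eq_add_one (hf : ∀ a b, a < b ↔ f a < f b) (h : f b = f a + 1) : a ⋖ b := by
  refine ⟨(hf a b).mpr (by omega), fun c hac hcb => ?_⟩
  have := (hf a c).mp hac
  have := (hf c b).mp hcb
  omega

theorem covBy_iff_eq_add_one (hf : ∀ a b, a < b ↔ f a < f b)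
    (hrange : (Set.range f).OrdConnected) : a ⋖ b ↔ f b = f a + 1 := by
  refine ⟨fun hab => ?_, covBy_of_eq_add_one hf⟩
  have hlt := (hf a b).mp hab.lt
  by_contra hne
  obtain ⟨c, hc⟩ := hrange.out (Set.mem_range_self a) (Set.mem_range_self b)
    (show f a + 1 ∈ Set.Icc (f a) (f b) from ⟨by omega, by omega⟩)
  exact hab.2 ((hf a c).mpr (by omega)) ((hf c b).mpr (by omega))

namespace SimpleGraph

theorem hasse_adj_natDist_le_one (hf : ∀ a b, a < b ↔ f a < f b)
    (hrange : (Set.range f).OrdConnected) (h : (hasse α).Adj a b) :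
    Nat.dist (f a) (f b) ≤ 1 := by
  rcases h with h | h <;> rw [covBy_iff_eq_add_one hf hrange] at h <;> simp [Nat.dist, h]

theorem exists_hasse_walk_length_eq (hf : ∀ a b, a < b ↔ f a < f b)
    (hrange : (Set.range f).OrdConnected) (h : f a < f b) :
    ∃ w : (hasse α).Walk a b, w.length = f b - f a := by
  obtain ⟨k, hk⟩ : ∃ k, f b = f a + k + 1 := ⟨f b - f a - 1, by omega⟩
  induction k generalizing a with
  | zero =>
    have hab : (hasse α).Adj a b := Or.inl (covBy_of_eq_add_one hf hk)
    exact ⟨hab.toWalk, by rw [hab.length_toWalk]; omega⟩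
  | succ k ih =>
    obtain ⟨c, hc⟩ := hrange.out (Set.mem_range_self a) (Set.mem_range_self b)
      (show f a + 1 ∈ Set.Icc (f a) (f b) from ⟨by omega, by omega⟩)
    obtain ⟨w, hw⟩ := ih (a := c) (by omega) (by omega)
    have hac : (hasse α).Adj a c := Or.inl (covBy_of_eq_add_one hf hc)
    exact ⟨.cons hac w, by rw [Walk.length_cons]; omega⟩

theorem hasse_dist_eq_natDist (hf : ∀ a b, a < b ↔ f a < f b)
    (hrange : (Set.range f).OrdConnected) (h : f a ≠ f b) :
    (hasse α).dist a b = Nat.dist (f a) (f b) := by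
  have key : ∀ {a b : α}, f a < f b → (hasse α).dist a b = Nat.dist (f a) (f b) := by
    intro a b h
    obtain ⟨w, hw⟩ := exists_hasse_walk_length_eq hf hrange h
    refine le_antisymm ?_ (Reachable.natDist_le_dist
      (fun _ _ => hasse_adj_natDist_le_one hf hrange) ⟨w⟩)
    rw [Nat.dist_eq_sub_of_le h.le, ← hw]
    exact dist_le w
  rcases Nat.lt_or_gt_of_ne h with h | h
  · exact key h
  · rw [dist_comm, Nat.dist_comm, key h]

theorem hasse_dist_eq_two (hf : ∀ a b, a < b ↔ f a < f b) {c : α} (hne : a ≠ b)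
    (heq : f a = f b) (hc : f a = f c + 1) : (hasse α).dist a b = 2 := by
  have hac : (hasse α).Adj a c := Or.inr (covBy_of_eq_add_one hf hc)
  have hcb : (hasse α).Adj c b := Or.inl (covBy_of_eq_add_one hf (heq ▸ hc))
  have hnadj : ¬(hasse α).Adj a b := by
    rintro (h | h) <;> have := (hf _ _).mp h.lt <;> omega
  let w : (hasse α).Walk a b := .cons hac hcb.toWalk
  have hlt := Reachable.one_lt_dist_of_ne_of_not_adj ⟨w⟩ hne hnadj
  have hle : (hasse α).dist a b ≤ 2 := dist_le w
  omega

end SimpleGraph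

end RankedWeakOrder

def diamondRank (n i : ℕ) : ℕ := if i ≤ n + 1 then i else i - 1

theorem diamondRank_eq_iff {n i j : ℕ} :
    diamondRank n i = diamondRank n j ↔ i = j ∨ s(i, j) = s(n + 1, n + 2) := by
  rw [Sym2.eq_iff]
  unfold diamondRank
  split_ifs <;> omega

theorem ordConnected_range_diamondRank {n : ℕ} {P : Type*} (e : P ≃ Fin (2 * n + 4)) :
    (Set.range fun p => diamondRank n (e p)).OrdConnected := by
  refine ⟨?_⟩
  rintro _ - _ ⟨q, rfl⟩ k ⟨-, hk⟩
  have hq := (e q).isLt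
  refine ⟨e.symm ⟨if k ≤ n + 1 then k else k + 1, ?_⟩, ?_⟩
  · simp only [diamondRank] at hk
    split_ifs at hk ⊢ <;> omega
  · simp only [Equiv.apply_symm_apply, diamondRank]
    split_ifs <;> omega

section DoubleTailedDiamond

variable {n : ℕ} {P : Type*} [PartialOrder P]

theorem lt_iff_diamondRank_lt (e : P ≃ Fin (2 * n + 4))
    (he : ∀ a b : P, a ≤ b ↔
      ((e a : ℕ) ≤ (e b : ℕ) ∧ ¬((e a : ℕ) = n + 1 ∧ (e b : ℕ) = n + 2))) (a b : P) :
    a < b ↔ diamondRank n (e a) < diamondRank n (e b) := by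
  rw [lt_iff_le_not_ge, he, he]
  unfold diamondRank
  split_ifs <;> omega

theorem hasseGraph_dist_eq (e : P ≃ Fin (2 * n + 4))
    (he : ∀ a b : P, a ≤ b ↔
      ((e a : ℕ) ≤ (e b : ℕ) ∧ ¬((e a : ℕ) = n + 1 ∧ (e b : ℕ) = n + 2))) (p q : P) :
    (hasseGraph P).dist p q = Nat.dist (diamondRank n (e p)) (diamondRank n (e q)) +
      if s((e p : ℕ), (e q : ℕ)) = s(n + 1, n + 2) then 2 else 0 := by
  have hf := lt_iff_diamondRank_lt e he
  change (SimpleGraph.hasse P).dist p q = _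
  by_cases hlev : diamondRank n (e p) = diamondRank n (e q)
  · rcases diamondRank_eq_iff.mp hlev with h | h
    · obtain rfl : p = q := e.injective (Fin.ext h)
      rw [SimpleGraph.dist_self, Nat.dist_self, if_neg (by rw [Sym2.eq_iff]; omega)]
    · have hp : (e p : ℕ) = n + 1 ∨ (e p : ℕ) = n + 2 := by rw [Sym2.eq_iff] at h; omega
      let c := e.symm ⟨n, by omega⟩
      have hc : diamondRank n (e p) = diamondRank n (e c) + 1 := by
        simp only [c, Equiv.apply_symm_apply, diamondRank]
        split_ifs <;> omega
      have hpq : p ≠ q := fun hpq => by rw [hpq, Sym2.eq_iff] at h; omega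
      rw [if_pos h, hlev, Nat.dist_self, SimpleGraph.hasse_dist_eq_two hf hpq hlev hc]
  · rw [if_neg fun h => hlev (diamondRank_eq_iff.mpr (Or.inr h)),
      SimpleGraph.hasse_dist_eq_natDist hf (ordConnected_range_diamondRank e) hlev, add_zero]

end DoubleTailedDiamond

theorem sum_range_diamondRank {M : Type*} [AddCommMonoid M] (n : ℕ) (h : ℕ → M) :
    ∑ i ∈ range (2 * n + 4), h (diamondRank n i) =
      ∑ a ∈ range (2 * n + 3), h a + h (n + 1) := by
  have hlow : ∀ i ∈ range (n + 2), h (diamondRank n i) = h i := by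
    intro i hi
    rw [mem_range] at hi
    rw [diamondRank, if_pos (by omega)]
  have hhigh : ∀ i ∈ range (n + 1), h (diamondRank n (n + 2 + (i + 1))) = h (n + 2 + i) := by
    intro i _
    rw [diamondRank, if_neg (by omega), show n + 2 + (i + 1) - 1 = n + 2 + i by omega]
  rw [show 2 * n + 4 = (n + 2) + (n + 2) by ring, show 2 * n + 3 = (n + 2) + (n + 1) by ring,
    sum_range_add _ (n + 2) (n + 2), sum_range_add _ (n + 2) (n + 1),
    sum_range_succ' (fun i => h (diamondRank n (n + 2 + i))),
    sum_congr rfl hlow, sum_congr rfl hhigh]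
  simp [diamondRank, add_assoc]

theorem two_mul_sum_range_natDist (c k : ℕ) :
    2 * ∑ b ∈ range (c + 1 + k), Nat.dist c b = c * (c + 1) + k * (k + 1) := by
  have hlow : ∑ b ∈ range (c + 1), Nat.dist c b = ∑ b ∈ range (c + 1), b := by
    rw [← sum_range_reflect]
    refine sum_congr rfl fun b hb => ?_
    rw [mem_range] at hb
    rw [Nat.dist_eq_sub_of_le_right (by omega)]
    omega
  have hhigh : ∑ i ∈ range k, Nat.dist c (c + 1 + i) = ∑ i ∈ range (k + 1), i := by
    rw [sum_range_succ']
    refine sum_congr rfl fun i _ => ?_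
    rw [Nat.dist_eq_sub_of_le (by omega)]
    omega
  have := sum_range_id_mul_two (c + 1)
  have := sum_range_id_mul_two (k + 1)
  simp only [add_tsub_cancel_right] at *
  rw [sum_range_add, hlow, hhigh]
  linarith

theorem three_mul_sum_range_sum_range_natDist (m : ℕ) :
    3 * ∑ a ∈ range (m + 1), ∑ b ∈ range (m + 1), Nat.dist a b = m * (m + 1) * (m + 2) := by
  induction m with
  | zero => simp
  | succ m ih =>
    have hrow := two_mul_sum_range_natDist (m + 1) 0
    rw [add_zero] at hrow
    rw [sum_range_succ, sum_congr rfl fun a _ => sum_range_succ (fun b => Nat.dist a b) (m + 1),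
      sum_add_distrib, sum_congr rfl fun a _ => Nat.dist_comm a (m + 1)]
    rw [sum_range_succ _ (m + 1), Nat.dist_self] at hrow ⊢
    linarith

theorem three_mul_sum_natDist_diamondRank (n : ℕ) :
    3 * ∑ i ∈ range (2 * n + 4), ∑ j ∈ range (2 * n + 4),
      Nat.dist (diamondRank n i) (diamondRank n j) = 2 * (n + 1) * (n + 2) * (4 * n + 9) := by
  have hT := three_mul_sum_range_sum_range_natDist (2 * n + 2)
  have hA := two_mul_sum_range_natDist (n + 1) (n + 1)
  rw [show n + 1 + 1 + (n + 1) = 2 * n + 3 by ring] at hA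
  rw [sum_congr rfl fun i _ => sum_range_diamondRank n (Nat.dist (diamondRank n i)),
    sum_range_diamondRank n fun a => ∑ b ∈ range (2 * n + 3), Nat.dist a b + Nat.dist a (n + 1),
    sum_add_distrib, sum_congr rfl fun a _ => Nat.dist_comm a (n + 1), Nat.dist_self]
  linarith

theorem sum_range_sum_range_ite_sym2_eq {N a b : ℕ} (hab : a ≠ b) (ha : a < N) (hb : b < N)
    (c : ℕ) :
    ∑ i ∈ range N, ∑ j ∈ range N, (if s(i, j) = s(a, b) then c else 0) = 2 * c := by
  have hrow : ∀ i, ∑ j ∈ range N, (if s(i, j) = s(a, b) then c else 0) =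
      (if i = a then c else 0) + (if i = b then c else 0) := by
    intro i
    by_cases hia : i = a <;> by_cases hib : i = b <;>
      simp [hia, hib, hab, hab.symm, ha.not_ge, hb.not_ge]
  simp only [hrow, sum_add_distrib, sum_ite_eq', mem_range, ha, hb, if_true]
  ring

theorem wienerIndex_eq_sum_range {P : Type*} [Preorder P] {N : ℕ} (e : P ≃ Fin N)
    (g : ℕ → ℕ → ℕ) (hg : ∀ p q, (hasseGraph P).dist p q = g (e p) (e q)) :
    wienerIndex P = ∑ i ∈ range N, ∑ j ∈ range N, g i j := by
  unfold wienerIndex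
  rw [← finsum_comp_equiv e.symm, finsum_eq_sum_of_fintype, ← Fin.sum_univ_eq_sum_range]
  refine sum_congr rfl fun i _ => ?_
  rw [← finsum_comp_equiv e.symm, finsum_eq_sum_of_fintype, ← Fin.sum_univ_eq_sum_range]
  refine sum_congr rfl fun j _ => ?_
  rw [hg, Equiv.apply_symm_apply, Equiv.apply_symm_apply]

/-- Wiener index of the double-tailed diamond poset $R_n$: a poset on
$\{0, …, 2n+3\}$ in which $i ≤ j$ exactly when $i ≤ j$ as integers and
$\{i,j\} ≠ \{n+1, n+2\}$. -/
theorem wiener_doubleTailedDiamond (n : ℕ) (P : Type*) [PartialOrder P]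
    (e : P ≃ Fin (2 * n + 4))
    (he : ∀ a b : P, a ≤ b ↔
      ((e a : ℕ) ≤ (e b : ℕ) ∧ ¬((e a : ℕ) = n + 1 ∧ (e b : ℕ) = n + 2))) :
    3 * wienerIndex P = 2 * (n + 3) * (4 * n ^ 2 + 9 * n + 8) := by
  rw [wienerIndex_eq_sum_range e (fun i j => Nat.dist (diamondRank n i) (diamondRank n j) +
    if s(i, j) = s(n + 1, n + 2) then 2 else 0) (hasseGraph_dist_eq e he)]
  simp only [sum_add_distrib]
  rw [sum_range_sum_range_ite_sym2_eq (by omega) (by omega) (by omega), mul_add,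
    three_mul_sum_natDist_diamondRank]
  ring
end
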